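/- Let f : ℍ₊ → ℍ be slice hyperholomorphic on the half-space ℍ₊ = {p ∈ ℍ : Re p > 0}, and for I ∈ 𝕊 put N_I(f) = sup_{x>0} ∫_ℝ |f(x + Iy)|² dy ∈ [0, ∞]. Then for all I, J ∈ 𝕊 one has N_J(f) ≤ 4 N_I(f); equivalently, (1/2)·N_I(f)^{1/2} ≤ N_J(f)^{1/2} ≤ 2·N_I(f)^{1/2}. -/

import Mathlib

local notation "ℍ" => Quaternion ℝ

open scoped ENNReal

/-- The complex plane `ℂ_I = ℝ + Iℝ` through `1` and `I`. -/
def slicePlane (I : ℍ) : Set ℍ := {p | ∃ x y : ℝ, p = (x : ℍ) + (y : ℍ) * I}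

/-- `f : Ω → ℍ` is (left) slice hyperholomorphic on `Ω`. -/
def SliceHyperholomorphicOn (f : ℍ → ℍ) (Ω : Set ℍ) : Prop :=
  DifferentiableOn ℝ f Ω ∧
    ∀ I : ℍ, I ^ 2 = -1 → ∀ p ∈ Ω ∩ slicePlane I,
      fderiv ℝ f p 1 + I * fderiv ℝ f p I = 0

/-- `N_I(f) = sup_{x>0} ∫_ℝ |f(x + Iy)|² dy ∈ [0, ∞]`, the (squared) Hardy norm of `f`
on the slice `Π₊,I`. -/
noncomputable def hardyN (f : ℍ → ℍ) (I : ℍ) : ℝ≥0∞ :=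
  ⨆ (x : ℝ) (_ : 0 < x), ∫⁻ y : ℝ, (‖f ((x : ℍ) + (y : ℍ) * I)‖₊ : ℝ≥0∞) ^ 2

/-!
The proof rests on the representation formula
`f (x + yJ) = ½(1 - JI) f (x + yI) + ½(1 + JI) f (x - yI)` for `x > 0`.
Let `ℂ` act on `ℍ` by left multiplication through the slice `ℂ_J`. For this complex structure,
both sides are holomorphic functions of `z = x + iy` on the right half-plane: `f` restricted to a
slice satisfies the Cauchy–Riemann equation of that slice, and the constants `½(1 ∓ JI)`
intertwine left multiplication by `I` (resp. `-I`, after conjugating `z`) with left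
multiplication by `J`. The two sides agree on the positive real axis, hence everywhere by the
identity theorem. The coefficients have norm at most `1`, so
`|f (x + yJ)| ≤ |f (x + yI)| + |f (x - yI)|`; squaring, integrating in `y`, and using that
`y ↦ -y` preserves Lebesgue measure gives `N_J(f) ≤ 4 N_I(f)`.
-/

open Complex ComplexConjugate Filter Topology MeasureTheory
open scoped NNReal

theorem norm_eq_one_of_sq_eq_neg_one {A : Type*} [NormedDivisionRing A] {K : A}
    (hK : K ^ 2 = -1) : ‖K‖ = 1 := by
  have h : ‖K‖ ^ 2 = 1 := by rw [← norm_pow, hK, norm_neg, norm_one]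
  exact (pow_eq_one_iff_of_nonneg (norm_nonneg K) two_ne_zero).1 h

section SliceEmbedding

variable {K : ℍ}

theorem Quaternion.re_eq_zero_of_sq_eq_neg_one (hK : K ^ 2 = -1) : K.re = 0 := by
  refine Quaternion.sq_eq_neg_normSq.1 ?_
  rw [hK, Quaternion.normSq_eq_norm_mul_self, norm_eq_one_of_sq_eq_neg_one hK, mul_one,
    Quaternion.coe_one]

noncomputable def sliceEmb (K : ℍ) (hK : K ^ 2 = -1) : ℂ →ₐ[ℝ] ℍ :=
  Complex.liftAux K (by rwa [← sq])

theorem sliceEmb_apply (hK : K ^ 2 = -1) (z : ℂ) :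
    sliceEmb K hK z = (z.re : ℍ) + (z.im : ℍ) * K := by
  rw [sliceEmb, liftAux_apply, Quaternion.coe_mul_eq_smul]
  rfl

theorem sliceEmb_I (hK : K ^ 2 = -1) : sliceEmb K hK Complex.I = K := liftAux_apply_I _ _

theorem sliceEmb_ofReal (hK : K ^ 2 = -1) (t : ℝ) : sliceEmb K hK t = t := by
  simp

theorem re_sliceEmb (hK : K ^ 2 = -1) (z : ℂ) : (sliceEmb K hK z).re = z.re := by
  simp [sliceEmb_apply, Quaternion.re_eq_zero_of_sq_eq_neg_one hK]

theorem norm_sliceEmb (hK : K ^ 2 = -1) (z : ℂ) : ‖sliceEmb K hK z‖ = ‖z‖ := by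
  have horth : inner ℝ (z.re : ℍ) (z.im • K) = 0 := by
    simp [Quaternion.inner_def, Quaternion.re_eq_zero_of_sq_eq_neg_one hK]
  rw [← sq_eq_sq₀ (norm_nonneg _) (norm_nonneg _), sliceEmb_apply, Quaternion.coe_mul_eq_smul,
    norm_add_sq_real, horth, norm_smul, Quaternion.norm_coe,
    norm_eq_one_of_sq_eq_neg_one hK, mul_one, Complex.sq_norm, Complex.normSq_apply]
  simp only [Real.norm_eq_abs, sq_abs]
  ring

end SliceEmbedding

theorem ContinuousLinearMap.ext_complex {E : Type*} [AddCommMonoid E] [Module ℝ E]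
    [TopologicalSpace E] {L M : ℂ →L[ℝ] E} (h1 : L 1 = M 1) (hI : L I = M I) : L = M :=
  coe_injective <| Complex.basisOneI.ext <| Fin.forall_fin_two.2 <| by simpa using ⟨h1, hI⟩

/-- `ℍ` as a complex vector space, `ℂ` acting by left multiplication through `ℂ_K`. -/
def SliceSpace (K : ℍ) (_ : K ^ 2 = -1) : Type := ℍ

namespace SliceSpace

variable (K : ℍ) (hK : K ^ 2 = -1)

noncomputable instance : NormedAddCommGroup (SliceSpace K hK) :=
  inferInstanceAs (NormedAddCommGroup ℍ)

instance : CompleteSpace (SliceSpace K hK) := inferInstanceAs (CompleteSpace ℍ)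

noncomputable instance : NormedSpace ℝ (SliceSpace K hK) := inferInstanceAs (NormedSpace ℝ ℍ)

noncomputable instance : Module ℂ (SliceSpace K hK) :=
  Module.compHom ℍ (sliceEmb K hK).toRingHom

noncomputable instance : NormedSpace ℂ (SliceSpace K hK) where
  norm_smul_le z (q : ℍ) :=
    (norm_mul (sliceEmb K hK z) q).trans_le <| by rw [norm_sliceEmb]; rfl

instance : IsScalarTower ℝ ℂ (SliceSpace K hK) where
  smul_assoc r z (q : ℍ) := by
    change sliceEmb K hK (r • z) * q = r • (sliceEmb K hK z * q)
    rw [map_smul, smul_mul_assoc]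

noncomputable def ofQuaternion : ℍ →L[ℝ] SliceSpace K hK := ContinuousLinearMap.id ℝ ℍ

theorem smul_ofQuaternion (z : ℂ) (q : ℍ) :
    z • ofQuaternion K hK q = ofQuaternion K hK (sliceEmb K hK z * q) :=
  rfl

end SliceSpace

/-- `g` has a real derivative at `w` which is complex-linear for the action of `ℂ` on `ℍ`
by left multiplication through `ℂ_K`. -/
def LeftHolomorphicAt (K : ℍ) (g : ℂ → ℍ) (w : ℂ) : Prop :=
  ∃ L : ℂ →L[ℝ] ℍ, HasFDerivAt g L w ∧ L I = K * L 1

namespace LeftHolomorphicAt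

variable {K : ℍ} {g h : ℂ → ℍ} {w : ℂ}

theorem add (hg : LeftHolomorphicAt K g w) (hh : LeftHolomorphicAt K h w) :
    LeftHolomorphicAt K (fun z => g z + h z) w := by
  obtain ⟨L, hL, hLI⟩ := hg
  obtain ⟨M, hM, hMI⟩ := hh
  exact ⟨L + M, hL.add hM, by simp [hLI, hMI, mul_add]⟩

theorem const_mul (hg : LeftHolomorphicAt K g w) {J C : ℍ} (hC : J * C = C * K) :
    LeftHolomorphicAt J (fun z => C * g z) w := by
  obtain ⟨L, hL, hLI⟩ := hg
  exact ⟨C • L, hL.const_mul C, by simp [hLI, ← mul_assoc, hC]⟩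

theorem comp_conj (hg : LeftHolomorphicAt K g (conj w)) :
    LeftHolomorphicAt (-K) (fun z => g (conj z)) w := by
  obtain ⟨L, hL, hLI⟩ := hg
  refine ⟨L.comp conjCLE.toContinuousLinearMap, hL.comp w conjCLE.hasFDerivAt, ?_⟩
  simp [hLI]

theorem differentiableAt_ofQuaternion (hK : K ^ 2 = -1) (hg : LeftHolomorphicAt K g w) :
    DifferentiableAt ℂ (fun z => SliceSpace.ofQuaternion K hK (g z)) w := by
  obtain ⟨L, hL, hLI⟩ := hg
  refine (hasFDerivAt_of_restrictScalars ℝ ((SliceSpace.ofQuaternion K hK).hasFDerivAt.comp w hL)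
    (f' := (ContinuousLinearMap.id ℂ ℂ).smulRight (SliceSpace.ofQuaternion K hK (L 1)))
    (ContinuousLinearMap.ext_complex ?_ ?_)).differentiableAt
  · simp
  · simp [hLI, SliceSpace.smul_ofQuaternion, sliceEmb_I]

end LeftHolomorphicAt

theorem eq_of_leftHolomorphicAt_of_eq_on_pos_real {K : ℍ} (hK : K ^ 2 = -1) {g h : ℂ → ℍ}
    (hg : ∀ w : ℂ, 0 < w.re → LeftHolomorphicAt K g w)
    (hh : ∀ w : ℂ, 0 < w.re → LeftHolomorphicAt K h w)
    (heq : ∀ t : ℝ, 0 < t → g t = h t) {z : ℂ} (hz : 0 < z.re) : g z = h z := by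
  have hanalytic : ∀ g : ℂ → ℍ, (∀ w : ℂ, 0 < w.re → LeftHolomorphicAt K g w) →
      AnalyticOnNhd ℂ (fun w => SliceSpace.ofQuaternion K hK (g w)) {w | 0 < w.re} :=
    fun g hg => DifferentiableOn.analyticOnNhd
      (fun w hw => ((hg w hw).differentiableAt_ofQuaternion hK).differentiableWithinAt)
      (isOpen_lt continuous_const continuous_re)
  have hofReal : Tendsto ((↑) : ℝ → ℂ) (𝓝[≠] 1) (𝓝[≠] 1) :=
    tendsto_nhdsWithin_of_tendsto_nhds_of_eventually_within _
      (by simpa using (continuous_ofReal.tendsto 1).mono_left nhdsWithin_le_nhds)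
      (eventually_mem_nhdsWithin.mono fun t ht => by simpa using ht)
  have hfreq : ∃ᶠ w in 𝓝[≠] (1 : ℂ),
      SliceSpace.ofQuaternion K hK (g w) = SliceSpace.ofQuaternion K hK (h w) := by
    refine hofReal.frequently (Eventually.frequently ?_)
    filter_upwards [nhdsWithin_le_nhds (lt_mem_nhds one_pos)] with t ht
    rw [heq t ht]
  exact (hanalytic g hg).eqOn_of_preconnected_of_frequently_eq (hanalytic h hh)
    (convex_halfSpace_re_gt 0).isPreconnected (by simp) hfreq hz

theorem SliceHyperholomorphicOn.leftHolomorphicAt_comp_sliceEmb {f : ℍ → ℍ} {Ω : Set ℍ}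
    (hf : SliceHyperholomorphicOn f Ω) (hΩ : IsOpen Ω) {K : ℍ} (hK : K ^ 2 = -1) {w : ℂ}
    (hw : sliceEmb K hK w ∈ Ω) : LeftHolomorphicAt K (fun z => f (sliceEmb K hK z)) w := by
  set p := sliceEmb K hK w
  have hCR : fderiv ℝ f p 1 + K * fderiv ℝ f p K = 0 :=
    hf.2 K hK p ⟨hw, w.re, w.im, sliceEmb_apply hK w⟩
  refine ⟨(fderiv ℝ f p).comp (sliceEmb K hK).toLinearMap.toContinuousLinearMap,
    (hf.1.differentiableAt (hΩ.mem_nhds hw)).hasFDerivAt.comp w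
      (sliceEmb K hK).toLinearMap.toContinuousLinearMap.hasFDerivAt, ?_⟩
  have hKK : K * K = -1 := by rw [← sq, hK]
  simp only [ContinuousLinearMap.coe_comp, Function.comp_apply,
    LinearMap.coe_toContinuousLinearMap', AlgHom.toLinearMap_apply, sliceEmb_I, map_one]
  calc fderiv ℝ f p K = -(K * K) * fderiv ℝ f p K := by rw [hKK, neg_neg, one_mul]
    _ = K * (fderiv ℝ f p 1 - (fderiv ℝ f p 1 + K * fderiv ℝ f p K)) := by noncomm_ring
    _ = K * fderiv ℝ f p 1 := by rw [hCR, sub_zero]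

theorem SliceHyperholomorphicOn.apply_sliceEmb_eq {f : ℍ → ℍ}
    (hf : SliceHyperholomorphicOn f {p : ℍ | 0 < p.re}) {I J : ℍ} (hI : I ^ 2 = -1)
    (hJ : J ^ 2 = -1) {z : ℂ} (hz : 0 < z.re) :
    f (sliceEmb J hJ z) = (2 : ℝ)⁻¹ • (1 - J * I) * f (sliceEmb I hI z)
      + (2 : ℝ)⁻¹ • (1 + J * I) * f (sliceEmb I hI (conj z)) := by
  have hΩ : IsOpen {p : ℍ | 0 < p.re} := isOpen_lt continuous_const Quaternion.continuous_re
  have hslice : ∀ {K : ℍ} (hK : K ^ 2 = -1) {w : ℂ}, 0 < w.re →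
      LeftHolomorphicAt K (fun z => f (sliceEmb K hK z)) w := fun hK w hw =>
    hf.leftHolomorphicAt_comp_sliceEmb hΩ hK (by simpa [re_sliceEmb hK] using hw)
  have hII : I * I = -1 := by rw [← sq, hI]
  have hJJ : J * J = -1 := by rw [← sq, hJ]
  set A : ℍ := (2 : ℝ)⁻¹ • (1 - J * I)
  set B : ℍ := (2 : ℝ)⁻¹ • (1 + J * I)
  have hJA : J * A = A * I := by
    rw [mul_smul_comm, smul_mul_assoc]
    congr 1
    rw [mul_sub, sub_mul, mul_one, one_mul, ← mul_assoc, hJJ, mul_assoc, hII]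
    noncomm_ring
  have hJB : J * B = B * -I := by
    rw [mul_smul_comm, smul_mul_assoc]
    congr 1
    rw [mul_add, add_mul, mul_one, one_mul, ← mul_assoc, hJJ, mul_neg, mul_assoc, hII]
    noncomm_ring
  have hAB : A + B = 1 := by
    rw [← smul_add, sub_add_add_cancel, ← two_smul ℝ (1 : ℍ), smul_smul,
      inv_mul_cancel₀ two_ne_zero, one_smul]
  refine eq_of_leftHolomorphicAt_of_eq_on_pos_real hJ (fun w hw => hslice hJ hw)
    (fun w hw => ((hslice hI hw).const_mul hJA).add
      ((hslice hI (w := conj w) (by simpa using hw)).comp_conj.const_mul hJB))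
    (fun t _ => ?_) hz
  simp only [sliceEmb_ofReal, conj_ofReal, ← add_mul, hAB, one_mul]

theorem SliceHyperholomorphicOn.nnnorm_apply_le {f : ℍ → ℍ}
    (hf : SliceHyperholomorphicOn f {p : ℍ | 0 < p.re}) {I J : ℍ} (hI : I ^ 2 = -1)
    (hJ : J ^ 2 = -1) {x : ℝ} (hx : 0 < x) (y : ℝ) :
    ‖f (x + y * J)‖₊ ≤ ‖f (x + y * I)‖₊ + ‖f (x + (-y : ℝ) * I)‖₊ := by
  have hrep := hf.apply_sliceEmb_eq hI hJ (z := ⟨x, y⟩) hx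
  simp only [sliceEmb_apply, conj_re, conj_im] at hrep
  have hJI : ‖J * I‖ = 1 := by
    rw [norm_mul, norm_eq_one_of_sq_eq_neg_one hI, norm_eq_one_of_sq_eq_neg_one hJ, one_mul]
  have hhalf : ∀ s : ℍ, ‖s‖ ≤ 2 → ‖(2 : ℝ)⁻¹ • s‖₊ ≤ 1 := fun s hs => by
    rw [← NNReal.coe_le_coe, coe_nnnorm, norm_smul, norm_inv, Real.norm_two, NNReal.coe_one]
    linarith
  have hA : ‖(2 : ℝ)⁻¹ • (1 - J * I)‖₊ ≤ 1 :=
    hhalf _ ((norm_sub_le _ _).trans (by rw [norm_one, hJI]; norm_num))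
  have hB : ‖(2 : ℝ)⁻¹ • (1 + J * I)‖₊ ≤ 1 :=
    hhalf _ ((norm_add_le _ _).trans (by rw [norm_one, hJI]; norm_num))
  rw [hrep]
  exact (nnnorm_add_le _ _).trans (add_le_add
    ((nnnorm_mul_le _ _).trans (mul_le_of_le_one_left' hA))
    ((nnnorm_mul_le _ _).trans (mul_le_of_le_one_left' hB)))

theorem MeasureTheory.lintegral_sq_le_four_mul_of_le_add_neg {G : Type*} [MeasurableSpace G]
    [InvolutiveNeg G] [MeasurableNeg G] {μ : Measure G} [μ.IsNegInvariant] {g a : G → ℝ≥0}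
    (ha : Measurable a) (h : ∀ y, g y ≤ a y + a (-y)) :
    ∫⁻ y, (g y : ℝ≥0∞) ^ 2 ∂μ ≤ 4 * ∫⁻ y, (a y : ℝ≥0∞) ^ 2 ∂μ := by
  have hsq (y : G) : (g y : ℝ≥0∞) ^ 2 ≤ 2 * ((a y : ℝ≥0∞) ^ 2 + (a (-y) : ℝ≥0∞) ^ 2) := by
    exact_mod_cast (pow_le_pow_left₀ zero_le (h y) 2).trans add_sq_le
  calc ∫⁻ y, (g y : ℝ≥0∞) ^ 2 ∂μ
      ≤ ∫⁻ y, 2 * ((a y : ℝ≥0∞) ^ 2 + (a (-y) : ℝ≥0∞) ^ 2) ∂μ := lintegral_mono hsq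
    _ = 2 * (∫⁻ y, (a y : ℝ≥0∞) ^ 2 ∂μ + ∫⁻ y, (a (-y) : ℝ≥0∞) ^ 2 ∂μ) := by
      rw [lintegral_const_mul' _ _ ENNReal.ofNat_ne_top, lintegral_add_left (by fun_prop)]
    _ = 4 * ∫⁻ y, (a y : ℝ≥0∞) ^ 2 ∂μ := by
      rw [lintegral_neg_eq_self fun y => (a y : ℝ≥0∞) ^ 2]
      ring

/-- Comparison of the Hardy norms of a slice hyperholomorphic function on the half-space
`ℍ₊` along two slices: `N_J(f) ≤ 4 N_I(f)` for all `I, J ∈ 𝕊`. -/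
theorem hardy_norm_slice_comparison (f : ℍ → ℍ)
    (hf : SliceHyperholomorphicOn f {p : ℍ | 0 < p.re})
    (I J : ℍ) (hI : I ^ 2 = -1) (hJ : J ^ 2 = -1) :
    hardyN f J ≤ 4 * hardyN f I := by
  refine iSup₂_le fun x hx => ?_
  have hcont : Continuous fun y : ℝ => f (x + y * I) :=
    hf.1.continuousOn.comp_continuous
      (continuous_const.add (Quaternion.continuous_coe.mul continuous_const)) fun y => by
      simpa [Quaternion.re_eq_zero_of_sq_eq_neg_one hI] using hx
  calc ∫⁻ y : ℝ, (‖f (x + y * J)‖₊ : ℝ≥0∞) ^ 2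
      ≤ 4 * ∫⁻ y : ℝ, (‖f (x + y * I)‖₊ : ℝ≥0∞) ^ 2 :=
        lintegral_sq_le_four_mul_of_le_add_neg hcont.nnnorm.measurable
          (hf.nnnorm_apply_le hI hJ hx)
    _ ≤ 4 * hardyN f I := by
      gcongr
      exact le_iSup₂ (f := fun (x : ℝ) (_ : 0 < x) => ∫⁻ y : ℝ, (‖f (x + y * I)‖₊ : ℝ≥0∞) ^ 2)
        x hx
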